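/- arXiv:quant-ph/0407061 — 2 statements merged into one kernel-verified Lean document; each statement's English description precedes it below -/
import Mathlib

section
/- (Causality bound for remote state preparation.) Suppose Alice and Bob share an arbitrary state and Bob applies one of K possible decoding operations (one for each possible classical message), each producing a state ρ_{i,j} when Alice intends message i ∈ {1,…,M} and Bob guesses j ∈ {1,…,K}, and suppose for each i there is a measurement operator 0 ≤ Π_i ≤ 𝟙 with ∑_i Π_i ≤ 𝟙 and Tr(ρ_{i,j(i)} Π_i) ≥ F for the correct decoding j(i). If without any communication from Alice the states Bob can produce are independent of i (i.e., ρ_{i,j} = ρ_j depends only on j), then a guessing strategy succeeds with probability at least F/K, while no-communication strategies succeed with probability at most 1/M; hence K ≥ F·M. -/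
/-!
Each state `ρ j` distributes a total weight `∑ i, Tr(ρ j Π i) ≤ Tr(ρ j) = 1` over the `M`
outcomes, because `∑ i, Π i ≤ 1` and the trace of a product of positive semidefinite matrices is
nonnegative. Hence all `K` states together carry weight at most `K`, while the correct decodings
`dec i` alone already carry weight at least `F * M`.
-/

open Matrix
open scoped ComplexOrder

theorem Fintype.sum_select_le_sum_sum {ι κ M : Type*} [Fintype ι] [Fintype κ] [AddCommMonoid M]
    [PartialOrder M] [IsOrderedAddMonoid M] {t : κ → ι → M} (ht : ∀ j i, 0 ≤ t j i) (f : ι → κ) :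
    ∑ i, t (f i) i ≤ ∑ j, ∑ i, t j i := by
  rw [Finset.sum_comm]
  exact Finset.sum_le_sum fun i _ ↦ Finset.single_le_sum (fun j _ ↦ ht j i) (Finset.mem_univ _)

namespace Matrix.PosSemidef

variable {n 𝕜 : Type*} [Fintype n] [RCLike 𝕜]

open scoped MatrixOrder in
theorem trace_mul_nonneg {A B : Matrix n n 𝕜} (hA : A.PosSemidef) (hB : B.PosSemidef) :
    0 ≤ (A * B).trace := by
  classical
  obtain ⟨C, rfl⟩ := CStarAlgebra.nonneg_iff_eq_star_mul_self.mp hA.nonneg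
  rw [mul_assoc, trace_mul_comm, star_eq_conjTranspose]
  exact (hB.mul_mul_conjTranspose_same C).trace_nonneg

theorem sum_trace_mul_le_trace [DecidableEq n] {ι : Type*} [Fintype ι] {ρ : Matrix n n 𝕜}
    (P : ι → Matrix n n 𝕜) (hρ : ρ.PosSemidef) (hP : (1 - ∑ i, P i).PosSemidef) :
    ∑ i, (ρ * P i).trace ≤ ρ.trace := by
  have h := hρ.trace_mul_nonneg hP
  rwa [mul_sub, mul_one, Finset.mul_sum, trace_sub, trace_sum, sub_nonneg] at h

end Matrix.PosSemidef

theorem causality_guessing_bound_general (d M K : ℕ)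
    (F : ℝ)
    (ρ : Fin K → Matrix (Fin d) (Fin d) ℂ)
    (hρ : ∀ j, (ρ j).PosSemidef) (hρtr : ∀ j, (ρ j).trace = 1)
    (Pi : Fin M → Matrix (Fin d) (Fin d) ℂ) (hPi : ∀ i, (Pi i).PosSemidef)
    (hPisum : ((1 : Matrix (Fin d) (Fin d) ℂ) - ∑ i, Pi i).PosSemidef)
    (dec : Fin M → Fin K)
    (hgood : ∀ i, F ≤ ((ρ (dec i) * Pi i).trace).re) :
    F * M ≤ K := by
  calc F * M = ∑ _i : Fin M, F := by simp [mul_comm]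
    _ ≤ ∑ i, ((ρ (dec i) * Pi i).trace).re := Finset.sum_le_sum fun i _ ↦ hgood i
    _ = (∑ i, (ρ (dec i) * Pi i).trace).re := (Complex.re_sum _ _).symm
    _ ≤ (∑ j, ∑ i, (ρ j * Pi i).trace).re := Complex.re_le_re <|
      Fintype.sum_select_le_sum_sum (fun j i ↦ (hρ j).trace_mul_nonneg (hPi i)) dec
    _ ≤ (∑ _j : Fin K, (1 : ℂ)).re := Complex.re_le_re <|
      Finset.sum_le_sum fun j _ ↦ hρtr j ▸ (hρ j).sum_trace_mul_le_trace Pi hPisum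
    _ = K := by simp

/-- causality bound: Suppose Bob, receiving no communication from Alice, can
produce one of `K` states `ρ j` (depending only on his guess `j`, not on Alice's message
`i`), and there are measurement operators `0 ≤ Π i` with `∑ i, Π i ≤ 𝟙` such that the
correct decoding `dec i` satisfies `Tr(ρ (dec i) · Π i) ≥ F` for each of `M` messages.
Guessing `j` uniformly succeeds with probability at least `F/K`, while any
no-communication strategy succeeds with probability at most `1/M`; hence `K ≥ F·M`. -/
theorem causality_guessing_bound (d M K : ℕ) (hM : 0 < M) (hK : 0 < K)
    (F : ℝ) (hF0 : 0 ≤ F) (hF1 : F ≤ 1)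
    (ρ : Fin K → Matrix (Fin d) (Fin d) ℂ)
    (hρ : ∀ j, (ρ j).PosSemidef) (hρtr : ∀ j, (ρ j).trace = 1)
    (Pi : Fin M → Matrix (Fin d) (Fin d) ℂ) (hPi : ∀ i, (Pi i).PosSemidef)
    (hPisum : ((1 : Matrix (Fin d) (Fin d) ℂ) - ∑ i, Pi i).PosSemidef)
    (dec : Fin M → Fin K)
    (hgood : ∀ i, F ≤ ((ρ (dec i) * Pi i).trace).re) :
    F * M ≤ K :=
  causality_guessing_bound_general d M K F ρ hρ hρtr Pi hPi hPisum dec hgood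
end

section
/- (Gentle measurement / tender operator lemma.) Let ρ be a density operator and 0 ≤ Π ≤ 𝟙 an operator with Tr(ρΠ) ≥ 1 − ε for some ε ∈ [0,1]. Then ‖ρ − ΠρΠ‖_1 ≤ √(8ε) (and hence also ‖ρ − ΠρΠ/Tr(ΠρΠ)‖_1 ≤ √(8ε) + 2ε). -/
open Matrix
open scoped ComplexOrder

/-- The positive semidefinite square root (Mathlib's former `Matrix.PosSemidef.sqrt`). -/
noncomputable def Matrix.PosSemidef.sqrt {n : Type*} {𝕜 : Type*} [Fintype n] [DecidableEq n]
    [RCLike 𝕜] {A : Matrix n n 𝕜} (hA : A.PosSemidef) : Matrix n n 𝕜 :=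
  hA.1.eigenvectorUnitary.1 * diagonal ((↑) ∘ (√·) ∘ hA.1.eigenvalues) *
    (star hA.1.eigenvectorUnitary : Matrix n n 𝕜)

/-- Trace norm `‖A‖₁ = Tr √(AᴴA)`. -/
noncomputable def traceNorm {n : Type*} [Fintype n] [DecidableEq n] (A : Matrix n n ℂ) : ℝ :=
  ((Matrix.posSemidef_conjTranspose_mul_self A).sqrt.trace).re

/-! Write `Q = 1 - Π`, so that `ρ - ΠρΠ = Qρ + ΠρQ`. Hölder's inequality for `A√ρ` and `√ρB`
gives `‖AρB‖₁ ≤ √Tr(AρA†) √Tr(B†ρB)`, and `0 ≤ Π ≤ 1` gives `Q² ≤ Q`, hence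
`Tr(QρQ) ≤ Tr(Qρ) ≤ ε`: each of the two terms has trace norm at most `√ε`. The triangle and
Hölder inequalities for the trace norm come from its variational form
`‖A‖₁ = max {Re Tr(CA) : CC† ≤ 1}`. Renormalising `ΠρΠ` costs `|1 - Tr(ΠρΠ)| ≤ 2ε` more. -/

open scoped MatrixOrder

namespace Matrix

variable {n 𝕜 : Type*} [Fintype n] [RCLike 𝕜]

lemma re_mul_conjTranspose_self_apply (M : Matrix n n 𝕜) (j : n) :
    RCLike.re ((M * Mᴴ) j j) = ∑ i, ‖M j i‖ ^ 2 := by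
  simp [mul_apply, RCLike.mul_conj]

lemma re_conjTranspose_mul_self_apply (M : Matrix n n 𝕜) (j : n) :
    RCLike.re ((Mᴴ * M) j j) = ∑ i, ‖M i j‖ ^ 2 := by
  simpa using re_mul_conjTranspose_self_apply Mᴴ j

lemma re_trace_mul_le_sum_sqrt_mul_sqrt (M N : Matrix n n 𝕜) :
    RCLike.re (M * N).trace ≤
      ∑ j, √(RCLike.re ((M * Mᴴ) j j)) * √(RCLike.re ((Nᴴ * N) j j)) := by
  rw [trace, map_sum]
  refine Finset.sum_le_sum fun j _ => ?_
  rw [re_mul_conjTranspose_self_apply, re_conjTranspose_mul_self_apply, diag_apply, mul_apply,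
    map_sum]
  calc ∑ i, RCLike.re (M j i * N i j) ≤ ∑ i, ‖M j i‖ * ‖N i j‖ :=
        Finset.sum_le_sum fun i _ => (RCLike.re_le_norm _).trans (norm_mul _ _).le
    _ ≤ _ := Real.sum_mul_le_sqrt_mul_sqrt _ _ _

lemma re_trace_mul_le_sqrt_mul_sqrt (M N : Matrix n n 𝕜) :
    RCLike.re (M * N).trace ≤ √(RCLike.re (M * Mᴴ).trace) * √(RCLike.re (Nᴴ * N).trace) := by
  refine (re_trace_mul_le_sum_sqrt_mul_sqrt M N).trans ?_
  simp only [trace, diag_apply, map_sum, re_mul_conjTranspose_self_apply,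
    re_conjTranspose_mul_self_apply]
  exact Real.sum_sqrt_mul_sqrt_le _ (fun _ => by positivity) fun _ => by positivity

variable [DecidableEq n]

lemma PosSemidef.sqrt_eq_cfcSqrt {A : Matrix n n 𝕜} (hA : A.PosSemidef) :
    hA.sqrt = CFC.sqrt A := by
  rw [CFC.sqrt_eq_cfc, cfc_nnreal_eq_real _ A hA.nonneg, hA.1.cfc_eq, IsHermitian.cfc,
    Unitary.conjStarAlgAut_apply, PosSemidef.sqrt]
  congr 3
  funext i
  simp [hA.eigenvalues_nonneg i]

lemma PosSemidef.re_trace_mul_nonneg {A B : Matrix n n 𝕜} (hA : A.PosSemidef)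
    (hB : B.PosSemidef) : 0 ≤ RCLike.re (A * B).trace := by
  have hS : (CFC.sqrt B)ᴴ = CFC.sqrt B := (nonneg_iff_posSemidef.1 (CFC.sqrt_nonneg B)).1
  have hconj : (A * B).trace = ((CFC.sqrt B)ᴴ * A * CFC.sqrt B).trace := by
    rw [hS, ← trace_mul_cycle, mul_assoc, CFC.sqrt_mul_sqrt_self B hB.nonneg]
  rw [hconj]
  exact (RCLike.nonneg_iff.1 (hA.conjTranspose_mul_mul_same _).trace_nonneg).1

lemma PosSemidef.re_trace_mul_le_re_trace_mul {ρ M N : Matrix n n 𝕜} (hρ : ρ.PosSemidef)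
    (hMN : (N - M).PosSemidef) : RCLike.re (M * ρ).trace ≤ RCLike.re (N * ρ).trace := by
  have := hMN.re_trace_mul_nonneg hρ
  rwa [sub_mul, trace_sub, map_sub, sub_nonneg] at this

lemma PosSemidef.posSemidef_sub_mul_self {P : Matrix n n 𝕜} (hP : P.PosSemidef)
    (hP1 : (1 - P).PosSemidef) : (P - P * P).PosSemidef := by
  set T := CFC.sqrt P
  have hTT : T * T = P := CFC.sqrt_mul_sqrt_self P hP.nonneg
  have hT : Tᴴ = T := (nonneg_iff_posSemidef.1 (CFC.sqrt_nonneg P)).1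
  have : P - P * P = Tᴴ * (1 - P) * T := by
    rw [hT, ← hTT]; noncomm_ring
  rw [this]
  exact hP1.conjTranspose_mul_mul_same T

end Matrix

open Matrix

section TraceNorm

variable {n : Type*} [Fintype n] [DecidableEq n]

lemma traceNorm_eq_sum_sqrt_eigenvalues (A : Matrix n n ℂ) :
    traceNorm A = ∑ j, √((posSemidef_conjTranspose_mul_self A).1.eigenvalues j) := by
  rw [traceNorm, PosSemidef.sqrt, trace_mul_cycle, Unitary.coe_star_mul_self, one_mul,
    trace_diagonal]
  simp

lemma traceNorm_eq_re_trace_cfcSqrt (A : Matrix n n ℂ) :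
    traceNorm A = (CFC.sqrt (Aᴴ * A)).trace.re := by
  rw [traceNorm, PosSemidef.sqrt_eq_cfcSqrt]

lemma traceNorm_eq_of_mul_self_eq {A P : Matrix n n ℂ} (hP : P.PosSemidef)
    (h : P * P = Aᴴ * A) : traceNorm A = P.trace.re := by
  rw [traceNorm_eq_re_trace_cfcSqrt, ← h, CFC.sqrt_mul_self P hP.nonneg]

lemma re_trace_mul_le_traceNorm {C : Matrix n n ℂ} (hC : (1 - C * Cᴴ).PosSemidef)
    (A : Matrix n n ℂ) : (C * A).trace.re ≤ traceNorm A := by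
  -- Cauchy–Schwarz column by column in an eigenbasis `W` of `A†A`: the `j`-th column of `AW` has
  -- norm `√λⱼ`, and that of `C†W` has norm at most `1`.
  set hAA := (posSemidef_conjTranspose_mul_self A).1
  have hdiag := hAA.conjStarAlgAut_star_eigenvectorUnitary
  rw [Unitary.conjStarAlgAut_apply, Unitary.coe_star, star_star] at hdiag
  set W : Matrix n n ℂ := (hAA.eigenvectorUnitary : Matrix n n ℂ)
  have hW : W * Wᴴ = 1 := Unitary.coe_mul_star_self _
  have hW' : Wᴴ * W = 1 := Unitary.coe_star_mul_self _
  have htrace : (Wᴴ * C * (A * W)).trace = (C * A).trace := by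
    rw [mul_assoc, trace_mul_comm, mul_assoc, mul_assoc, hW, mul_one]
  have hCW : ∀ j, ((Wᴴ * C * (Wᴴ * C)ᴴ) j j).re ≤ 1 := by
    have hconj : Wᴴ * (1 - C * Cᴴ) * W = 1 - Wᴴ * C * (Wᴴ * C)ᴴ := by
      rw [conjTranspose_mul, conjTranspose_conjTranspose, mul_sub, sub_mul, mul_one, hW']
      simp only [mul_assoc]
    intro j
    have := (hconj ▸ hC.conjTranspose_mul_mul_same W).diag_nonneg (i := j)
    simpa using (Complex.nonneg_iff.1 this).1
  have hAW : ∀ j, (((A * W)ᴴ * (A * W)) j j).re = hAA.eigenvalues j := by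
    have : (A * W)ᴴ * (A * W) = Wᴴ * (Aᴴ * A) * W := by
      rw [conjTranspose_mul]; simp only [mul_assoc]
    intro j
    rw [this, ← star_eq_conjTranspose, hdiag]
    simp
  rw [← htrace, traceNorm_eq_sum_sqrt_eigenvalues]
  refine (re_trace_mul_le_sum_sqrt_mul_sqrt (Wᴴ * C) (A * W)).trans
    (Finset.sum_le_sum fun j _ => ?_)
  rw [RCLike.re_to_complex, RCLike.re_to_complex, hAW]
  exact mul_le_of_le_one_left (Real.sqrt_nonneg _) (Real.sqrt_le_one.2 (hCW j))

lemma exists_re_trace_mul_eq_traceNorm (A : Matrix n n ℂ) :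
    ∃ C : Matrix n n ℂ, (1 - C * Cᴴ).PosSemidef ∧ (C * A).trace.re = traceNorm A := by
  set B := Aᴴ * A
  have hB : 0 ≤ B := nonneg_iff_posSemidef.2 (posSemidef_conjTranspose_mul_self A)
  have hcont (f : ℝ → ℝ) : ContinuousOn f (spectrum ℝ B) := B.finite_real_spectrum.continuousOn f
  -- `C = (A†A)^{-1/2} A†` (with `(√0)⁻¹ = 0`) is `V†` for the polar decomposition `A = V|A|`.
  set s := cfc (fun x : ℝ => (√x)⁻¹) B
  have hs : sᴴ = s := IsSelfAdjoint.cfc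
  refine ⟨s * Aᴴ, ?_, ?_⟩
  · have : s * Aᴴ * (s * Aᴴ)ᴴ = cfc (fun x : ℝ => (√x)⁻¹ * x * (√x)⁻¹) B := by
      rw [conjTranspose_mul, conjTranspose_conjTranspose, hs, cfc_mul _ _ B (hcont _) (hcont _),
        cfc_mul _ _ B (hcont _) (hcont _), cfc_id' ℝ B]
      simp only [s, B, mul_assoc]
    rw [← le_iff, this]
    refine cfc_le_one _ B fun x _ => ?_
    rw [inv_mul_eq_div, Real.div_sqrt, ← div_eq_mul_inv]
    exact div_self_le_one _
  · have : s * Aᴴ * A = CFC.sqrt B := by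
      have hsqrt : (fun x : ℝ => (√x)⁻¹ * x) = Real.sqrt := by
        funext x; rw [inv_mul_eq_div, Real.div_sqrt]
      calc s * Aᴴ * A = cfc (fun x : ℝ => (√x)⁻¹) B * cfc (fun x : ℝ => x) B := by
            rw [mul_assoc, cfc_id' ℝ B]
        _ = CFC.sqrt B := by
            rw [← cfc_mul _ _ B (hcont _) (hcont _), hsqrt, CFC.sqrt_eq_real_sqrt B, cfcₙ_eq_cfc]
    rw [this, traceNorm_eq_re_trace_cfcSqrt]

lemma traceNorm_add_le (A B : Matrix n n ℂ) : traceNorm (A + B) ≤ traceNorm A + traceNorm B := by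
  obtain ⟨C, hC, hCAB⟩ := exists_re_trace_mul_eq_traceNorm (A + B)
  rw [← hCAB, mul_add, trace_add, Complex.add_re]
  exact add_le_add (re_trace_mul_le_traceNorm hC A) (re_trace_mul_le_traceNorm hC B)

lemma traceNorm_mul_le (X Y : Matrix n n ℂ) :
    traceNorm (X * Y) ≤ √(X * Xᴴ).trace.re * √(Yᴴ * Y).trace.re := by
  obtain ⟨C, hC, hCXY⟩ := exists_re_trace_mul_eq_traceNorm (X * Y)
  have hYC : ((Y * C)ᴴ * (Y * C)).trace.re ≤ (Yᴴ * Y).trace.re := by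
    have hgap : (Yᴴ * Y).trace - ((Y * C)ᴴ * (Y * C)).trace = (Y * (1 - C * Cᴴ) * Yᴴ).trace := by
      rw [trace_mul_comm Yᴴ, trace_mul_comm (Y * C)ᴴ, ← trace_sub, conjTranspose_mul]
      congr 1
      noncomm_ring
    have := (hC.mul_mul_conjTranspose_same Y).trace_nonneg
    rw [← hgap, Complex.nonneg_iff, Complex.sub_re] at this
    linarith [this.1]
  calc traceNorm (X * Y) = (X * (Y * C)).trace.re := by
        rw [← hCXY, trace_mul_comm, mul_assoc]
    _ ≤ √(X * Xᴴ).trace.re * √((Y * C)ᴴ * (Y * C)).trace.re :=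
        re_trace_mul_le_sqrt_mul_sqrt X (Y * C)
    _ ≤ _ := by gcongr

lemma Matrix.PosSemidef.traceNorm_mul_mul_le {ρ : Matrix n n ℂ} (hρ : ρ.PosSemidef)
    (A B : Matrix n n ℂ) :
    traceNorm (A * ρ * B) ≤ √(A * ρ * Aᴴ).trace.re * √(Bᴴ * ρ * B).trace.re := by
  set S := CFC.sqrt ρ
  have hSS : S * S = ρ := CFC.sqrt_mul_sqrt_self ρ hρ.nonneg
  have hS : Sᴴ = S := (nonneg_iff_posSemidef.1 (CFC.sqrt_nonneg ρ)).1
  have hAS : A * S * (A * S)ᴴ = A * ρ * Aᴴ := by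
    rw [conjTranspose_mul, hS, ← hSS]; simp only [mul_assoc]
  have hSB : (S * B)ᴴ * (S * B) = Bᴴ * ρ * B := by
    rw [conjTranspose_mul, hS, ← hSS]; simp only [mul_assoc]
  have := traceNorm_mul_le (A * S) (S * B)
  rwa [hAS, hSB, ← mul_assoc, mul_assoc A, hSS] at this

lemma Matrix.PosSemidef.traceNorm_real_smul {X : Matrix n n ℂ} (hX : X.PosSemidef) (c : ℝ) :
    traceNorm ((c : ℂ) • X) = |c| * X.trace.re := by
  have habs : (0 : ℂ) ≤ ((|c| : ℝ) : ℂ) := by exact_mod_cast abs_nonneg c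
  have hsq : (((|c| : ℝ) : ℂ) • X) * (((|c| : ℝ) : ℂ) • X) = ((c : ℂ) • X)ᴴ * ((c : ℂ) • X) := by
    rw [conjTranspose_smul, hX.1, smul_mul_smul_comm, smul_mul_smul_comm, Complex.star_def,
      Complex.conj_ofReal, ← Complex.ofReal_mul, ← Complex.ofReal_mul, abs_mul_abs_self]
  rw [traceNorm_eq_of_mul_self_eq (hX.smul habs) hsq, trace_smul, smul_eq_mul,
    Complex.re_ofReal_mul]

lemma Matrix.PosSemidef.traceNorm_sub_inv_trace_smul_le {X : Matrix n n ℂ} (hX : X.PosSemidef)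
    (ρ : Matrix n n ℂ) :
    traceNorm (ρ - X.trace⁻¹ • X) ≤ traceNorm (ρ - X) + |1 - X.trace.re| := by
  set r := X.trace.re
  have hr : 0 ≤ r := (Complex.nonneg_iff.1 hX.trace_nonneg).1
  have htr : X.trace = r := Complex.eq_re_of_ofReal_le (r := 0) (by simpa using hX.trace_nonneg)
  have hsplit : ρ - X.trace⁻¹ • X = (ρ - X) + ((1 - r⁻¹ : ℝ) : ℂ) • X := by
    rw [htr, Complex.ofReal_sub, Complex.ofReal_one, Complex.ofReal_inv, sub_smul, one_smul]
    abel
  have hscale : |1 - r⁻¹| * r ≤ |1 - r| := by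
    rcases hr.eq_or_lt with h | h
    · simp [← h]
    · refine le_of_eq ?_
      calc |1 - r⁻¹| * r = |(1 - r⁻¹) * r| := by rw [abs_mul, abs_of_pos h]
        _ = |1 - r| := by rw [sub_mul, one_mul, inv_mul_cancel₀ h.ne', abs_sub_comm]
  calc traceNorm (ρ - X.trace⁻¹ • X)
      ≤ traceNorm (ρ - X) + traceNorm (((1 - r⁻¹ : ℝ) : ℂ) • X) := hsplit ▸ traceNorm_add_le _ _
    _ = traceNorm (ρ - X) + |1 - r⁻¹| * r := by rw [hX.traceNorm_real_smul]
    _ ≤ traceNorm (ρ - X) + |1 - r| := by gcongr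

end TraceNorm

section GentleMeasurement

variable {n : Type*} [Fintype n] [DecidableEq n] {ρ P : Matrix n n ℂ}

lemma re_trace_compl_mul_mul_compl_le (hρ : ρ.PosSemidef) (htr : ρ.trace = 1)
    (hP : P.PosSemidef) (hP1 : (1 - P).PosSemidef) :
    ((1 - P) * ρ * (1 - P)).trace.re ≤ 1 - (ρ * P).trace.re := by
  have hQ : ((1 - P) - (1 - P) * (1 - P)).PosSemidef :=
    hP1.posSemidef_sub_mul_self (by rwa [sub_sub_cancel])
  calc ((1 - P) * ρ * (1 - P)).trace.re = ((1 - P) * (1 - P) * ρ).trace.re := by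
        rw [trace_mul_cycle]
    _ ≤ ((1 - P) * ρ).trace.re := hρ.re_trace_mul_le_re_trace_mul hQ
    _ = 1 - (ρ * P).trace.re := by
        rw [sub_mul, one_mul, trace_sub, htr, trace_mul_comm P, Complex.sub_re, Complex.one_re]

lemma re_trace_mul_mul_le_one (hρ : ρ.PosSemidef) (htr : ρ.trace = 1)
    (hP : P.PosSemidef) (hP1 : (1 - P).PosSemidef) : (P * ρ * P).trace.re ≤ 1 := by
  calc (P * ρ * P).trace.re = (P * P * ρ).trace.re := by rw [trace_mul_cycle]
    _ ≤ (P * ρ).trace.re := hρ.re_trace_mul_le_re_trace_mul (hP.posSemidef_sub_mul_self hP1)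
    _ ≤ (1 * ρ).trace.re := hρ.re_trace_mul_le_re_trace_mul hP1
    _ = 1 := by rw [one_mul, htr, Complex.one_re]

lemma two_mul_re_trace_sub_one_le (hρ : ρ.PosSemidef) (htr : ρ.trace = 1)
    (hP : P.IsHermitian) : 2 * (ρ * P).trace.re - 1 ≤ (P * ρ * P).trace.re := by
  have hQρQ := (Complex.nonneg_iff.1 (hρ.mul_mul_conjTranspose_same (1 - P)).trace_nonneg).1
  have hexpand : (1 - P) * ρ * (1 - P)ᴴ = ρ - P * ρ - ρ * P + P * ρ * P := by
    rw [conjTranspose_sub, conjTranspose_one, hP.eq]; noncomm_ring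
  rw [hexpand, trace_add, trace_sub, trace_sub, trace_mul_comm P, htr] at hQρQ
  simp only [Complex.add_re, Complex.sub_re, Complex.one_re] at hQρQ
  linarith

lemma traceNorm_sub_mul_mul_le (hρ : ρ.PosSemidef) (htr : ρ.trace = 1)
    (hP : P.PosSemidef) (hP1 : (1 - P).PosSemidef) :
    traceNorm (ρ - P * ρ * P) ≤ 2 * √(1 - (ρ * P).trace.re) := by
  have hQ : (1 - P)ᴴ = 1 - P := hP1.1.eq
  have hQρ : traceNorm ((1 - P) * ρ * 1) ≤ √((1 - P) * ρ * (1 - P)).trace.re := by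
    simpa [hQ, htr] using hρ.traceNorm_mul_mul_le (1 - P) 1
  have hPρQ : traceNorm (P * ρ * (1 - P)) ≤ √((1 - P) * ρ * (1 - P)).trace.re := by
    have := hρ.traceNorm_mul_mul_le P (1 - P)
    rw [hP.1.eq, hQ] at this
    exact this.trans (mul_le_of_le_one_left (Real.sqrt_nonneg _)
      (Real.sqrt_le_one.2 (re_trace_mul_mul_le_one hρ htr hP hP1)))
  calc traceNorm (ρ - P * ρ * P)
      = traceNorm ((1 - P) * ρ * 1 + P * ρ * (1 - P)) := by congr 1; noncomm_ring
    _ ≤ traceNorm ((1 - P) * ρ * 1) + traceNorm (P * ρ * (1 - P)) := traceNorm_add_le _ _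
    _ ≤ 2 * √((1 - P) * ρ * (1 - P)).trace.re := by linarith
    _ ≤ 2 * √(1 - (ρ * P).trace.re) := by
        gcongr; exact re_trace_compl_mul_mul_compl_le hρ htr hP hP1

end GentleMeasurement

theorem gentle_measurement_general (d : ℕ) (ε : ℝ) (hε0 : 0 ≤ ε)
    (ρ Pi : Matrix (Fin d) (Fin d) ℂ) (hρ : ρ.PosSemidef) (htr : ρ.trace = 1)
    (hPi0 : Pi.PosSemidef) (hPi1 : ((1 : Matrix (Fin d) (Fin d) ℂ) - Pi).PosSemidef)
    (hexp : 1 - ε ≤ ((ρ * Pi).trace).re) :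
    traceNorm (ρ - Pi * ρ * Pi) ≤ Real.sqrt (8 * ε) ∧
    traceNorm (ρ - ((Pi * ρ * Pi).trace)⁻¹ • (Pi * ρ * Pi)) ≤ Real.sqrt (8 * ε) + 2 * ε := by
  have hsqrt : 2 * √(1 - (ρ * Pi).trace.re) ≤ √(8 * ε) := by
    rw [show 8 * ε = 2 ^ 2 * (2 * ε) by ring, Real.sqrt_mul (by norm_num),
      Real.sqrt_sq (by norm_num)]
    gcongr
    linarith
  have hnear := (traceNorm_sub_mul_mul_le hρ htr hPi0 hPi1).trans hsqrt
  have hPρP : (Pi * ρ * Pi).PosSemidef := by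
    simpa only [hPi0.1.eq] using hρ.mul_mul_conjTranspose_same Pi
  refine ⟨hnear, (hPρP.traceNorm_sub_inv_trace_smul_le ρ).trans ?_⟩
  have hle := re_trace_mul_mul_le_one hρ htr hPi0 hPi1
  have hge := two_mul_re_trace_sub_one_le hρ htr hPi0.1
  rw [abs_of_nonneg (by linarith)]
  linarith

/-- gentle measurement / tender operator lemma: If `ρ` is a density
operator and `0 ≤ Π ≤ 𝟙` satisfies `Tr(ρΠ) ≥ 1 − ε` for `ε ∈ [0,1]`, then
`‖ρ − ΠρΠ‖₁ ≤ √(8ε)`, and hence also `‖ρ − ΠρΠ/Tr(ΠρΠ)‖₁ ≤ √(8ε) + 2ε`. -/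
theorem gentle_measurement (d : ℕ) (ε : ℝ) (hε0 : 0 ≤ ε) (hε1 : ε ≤ 1)
    (ρ Pi : Matrix (Fin d) (Fin d) ℂ) (hρ : ρ.PosSemidef) (htr : ρ.trace = 1)
    (hPi0 : Pi.PosSemidef) (hPi1 : ((1 : Matrix (Fin d) (Fin d) ℂ) - Pi).PosSemidef)
    (hexp : 1 - ε ≤ ((ρ * Pi).trace).re) :
    traceNorm (ρ - Pi * ρ * Pi) ≤ Real.sqrt (8 * ε) ∧
    traceNorm (ρ - ((Pi * ρ * Pi).trace)⁻¹ • (Pi * ρ * Pi)) ≤ Real.sqrt (8 * ε) + 2 * ε :=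
  gentle_measurement_general d ε hε0 ρ Pi hρ htr hPi0 hPi1 hexp
end
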